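/- Let δ > 1 and e ∈ [0,1), and let γ_{δ,e} : [0,2π] → M₂(ℝ) be the solution of γ′(θ) = J₂ diag(1, 1 − δ/(1 + e cos θ)) γ(θ), γ(0) = I₂, where J₂ = [[0,−1],[1,0]]. Then γ_{δ,e}(2π) is hyperbolic; more precisely, there exists a real number μ > 1 such that the eigenvalues of γ_{δ,e}(2π) are μ and μ⁻¹. -/

import Mathlib

/-!
Each column `(x, y)` of `γ` solves `x' = -(1 - δ / ρ) y`, `y' = x` with `ρ θ = 1 + e cos θ`.
In the Kepler variables `u = y / ρ`, `w = ρ x + e sin θ · y` this becomes the cooperative system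
`u' = w / ρ²`, `w' = (δ - 1) ρ u`, whose coefficients are positive because `δ > 1` and `|e| < 1`;
along it both components of a solution starting in the positive quadrant increase strictly.
As `ρ` and `sin` take the same values at `0` and `2π`, this gives `γ(2π)₀₀ > 1` and `γ(2π)₁₁ > 1`.
The Wronskian gives `det γ(2π) = 1`, so the trace exceeds `2` and the eigenvalues are `μ` and
`μ⁻¹` with `μ > 1`.
-/

open Real Matrix Polynomial

noncomputable section

/-- A real square matrix is hyperbolic if it has no eigenvalue of modulus `1`
(eigenvalues taken over `ℂ`). -/
def IsHyperbolicMat {m : Type*} [Fintype m] [DecidableEq m] (M : Matrix m m ℝ) : Prop :=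
  ∀ z : ℂ, z ∈ spectrum ℂ (M.map (Complex.ofReal : ℝ → ℂ)) → ‖z‖ ≠ 1

open Set

section Cooperative

variable {a b : ℝ}

lemma monotoneOn_Icc_of_hasDerivAt_nonneg {f f' : ℝ → ℝ}
    (hf : ∀ t ∈ Icc a b, HasDerivAt f (f' t) t) (hf' : ∀ t ∈ Ioo a b, 0 ≤ f' t) :
    MonotoneOn f (Icc a b) :=
  monotoneOn_of_hasDerivWithinAt_nonneg (convex_Icc a b)
    (fun t ht ↦ (hf t ht).continuousAt.continuousWithinAt)
    (by simpa only [interior_Icc] using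
      fun t ht ↦ (hf t (Ioo_subset_Icc_self ht)).hasDerivWithinAt)
    (by simpa only [interior_Icc] using hf')

lemma strictMonoOn_Icc_of_hasDerivAt_pos {f f' : ℝ → ℝ}
    (hf : ∀ t ∈ Icc a b, HasDerivAt f (f' t) t) (hf' : ∀ t ∈ Ioo a b, 0 < f' t) :
    StrictMonoOn f (Icc a b) :=
  strictMonoOn_of_hasDerivWithinAt_pos (convex_Icc a b)
    (fun t ht ↦ (hf t ht).continuousAt.continuousWithinAt)
    (by simpa only [interior_Icc] using
      fun t ht ↦ (hf t (Ioo_subset_Icc_self ht)).hasDerivWithinAt)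
    (by simpa only [interior_Icc] using hf')

-- `(u w)' = p w² + q u² ≥ 0` and then `(u²)' = 2 p u w ≥ 0`, so `u` cannot reach `0`.
lemma pos_of_cooperative {u w p q : ℝ → ℝ}
    (hp : ∀ t ∈ Ioo a b, 0 < p t) (hq : ∀ t ∈ Ioo a b, 0 < q t)
    (hu : ∀ t ∈ Icc a b, HasDerivAt u (p t * w t) t)
    (hw : ∀ t ∈ Icc a b, HasDerivAt w (q t * u t) t)
    (hu₀ : 0 < u a) (hw₀ : 0 ≤ w a) {t : ℝ} (ht : t ∈ Icc a b) :
    0 < u t := by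
  have hmono_uw : MonotoneOn (fun t ↦ u t * w t) (Icc a b) :=
    monotoneOn_Icc_of_hasDerivAt_nonneg (fun t ht ↦ (hu t ht).mul (hw t ht)) fun t ht ↦ by
      nlinarith [mul_nonneg (hp t ht).le (sq_nonneg (w t)),
        mul_nonneg (hq t ht).le (sq_nonneg (u t))]
  have hmono_uu : MonotoneOn (fun t ↦ u t * u t) (Icc a b) :=
    monotoneOn_Icc_of_hasDerivAt_nonneg (fun t ht ↦ (hu t ht).mul (hu t ht)) fun t ht ↦ by
      have huw : u a * w a ≤ u t * w t :=
        hmono_uw (left_mem_Icc.2 (ht.1.le.trans ht.2.le)) (Ioo_subset_Icc_self ht) ht.1.le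
      nlinarith [mul_nonneg (hp t ht).le ((mul_nonneg hu₀.le hw₀).trans huw)]
  have hne : ∀ s ∈ Icc a t, u s ≠ 0 := fun s hs hs0 ↦ by
    have := hmono_uu (left_mem_Icc.2 (ht.1.trans ht.2)) ⟨hs.1, hs.2.trans ht.2⟩ hs.1
    simp only [hs0, mul_zero] at this
    nlinarith
  by_contra! hut
  obtain ⟨s, hs, hus⟩ := intermediate_value_Icc' ht.1
    (fun s hs ↦ (hu s ⟨hs.1, hs.2.trans ht.2⟩).continuousAt.continuousWithinAt)
    (show (0 : ℝ) ∈ Icc (u t) (u a) from ⟨hut, hu₀.le⟩)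
  exact hne s hs hus

lemma lt_and_lt_of_cooperative {u w p q : ℝ → ℝ}
    (hp : ∀ t ∈ Ioo a b, 0 < p t) (hq : ∀ t ∈ Ioo a b, 0 < q t)
    (hu : ∀ t ∈ Icc a b, HasDerivAt u (p t * w t) t)
    (hw : ∀ t ∈ Icc a b, HasDerivAt w (q t * u t) t)
    (hab : a < b) (hu₀ : 0 < u a) (hw₀ : 0 ≤ w a) :
    u a < u b ∧ w a < w b := by
  have ha : a ∈ Icc a b := left_mem_Icc.2 hab.le
  have hb : b ∈ Icc a b := right_mem_Icc.2 hab.le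
  have hw_mono : StrictMonoOn w (Icc a b) :=
    strictMonoOn_Icc_of_hasDerivAt_pos hw fun t ht ↦
      mul_pos (hq t ht) (pos_of_cooperative hp hq hu hw hu₀ hw₀ (Ioo_subset_Icc_self ht))
  have hu_mono : StrictMonoOn u (Icc a b) :=
    strictMonoOn_Icc_of_hasDerivAt_pos hu fun t ht ↦
      mul_pos (hp t ht) (hw₀.trans_lt (hw_mono ha (Ioo_subset_Icc_self ht) ht.1))
  exact ⟨hu_mono ha hb hab, hw_mono ha hb hab⟩

end Cooperative

section Hill

variable {a b : ℝ}

-- The first-order form of Hill's equation `y'' + c y = 0`.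
def IsHillSolution (c : ℝ → ℝ) (a b : ℝ) (x y : ℝ → ℝ) : Prop :=
  ∀ t ∈ Icc a b, HasDerivAt x (-(c t * y t)) t ∧ HasDerivAt y (x t) t

lemma IsHillSolution.wronskian_eq {c x₁ y₁ x₂ y₂ : ℝ → ℝ} (h₁ : IsHillSolution c a b x₁ y₁)
    (h₂ : IsHillSolution c a b x₂ y₂) (hab : a ≤ b) :
    x₁ b * y₂ b - x₂ b * y₁ b = x₁ a * y₂ a - x₂ a * y₁ a := by
  have hderiv : ∀ t ∈ Icc a b, HasDerivAt (fun t ↦ x₁ t * y₂ t - x₂ t * y₁ t) 0 t :=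
    fun t ht ↦ by
      obtain ⟨hx₁, hy₁⟩ := h₁ t ht
      obtain ⟨hx₂, hy₂⟩ := h₂ t ht
      exact ((hx₁.mul hy₂).sub (hx₂.mul hy₁)).congr_deriv (by ring)
  exact constant_of_has_deriv_right_zero
    (fun t ht ↦ (hderiv t ht).continuousAt.continuousWithinAt)
    (fun t ht ↦ (hderiv t (Ico_subset_Icc_self ht)).hasDerivWithinAt) b (right_mem_Icc.2 hab)

lemma isHillSolution_col {c : ℝ → ℝ} {γ : ℝ → Matrix (Fin 2) (Fin 2) ℝ}
    (hγ : ∀ θ ∈ Icc a b, ∀ i j, HasDerivAt (fun t ↦ γ t i j)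
      (((!![0, -1; 1, 0] : Matrix (Fin 2) (Fin 2) ℝ) * !![1, 0; 0, c θ] * γ θ) i j) θ)
    (j : Fin 2) :
    IsHillSolution c a b (fun t ↦ γ t 0 j) (fun t ↦ γ t 1 j) := fun θ hθ ↦
  ⟨by simpa [Matrix.mul_apply, Fin.sum_univ_two] using hγ θ hθ 0 j,
    by simpa [Matrix.mul_apply, Fin.sum_univ_two] using hγ θ hθ 1 j⟩

lemma det_eq_one_of_hasDerivAt {c : ℝ → ℝ} {γ : ℝ → Matrix (Fin 2) (Fin 2) ℝ}
    (hγ : ∀ θ ∈ Icc a b, ∀ i j, HasDerivAt (fun t ↦ γ t i j)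
      (((!![0, -1; 1, 0] : Matrix (Fin 2) (Fin 2) ℝ) * !![1, 0; 0, c θ] * γ θ) i j) θ)
    (hab : a ≤ b) (hγa : γ a = 1) :
    (γ b).det = 1 := by
  simpa [det_fin_two, hγa] using
    (isHillSolution_col hγ 0).wronskian_eq (isHillSolution_col hγ 1) hab

end Hill

lemma one_add_mul_cos_pos {e : ℝ} (he : |e| < 1) (t : ℝ) : 0 < 1 + e * cos t := by
  have : |e * cos t| < 1 := by
    rw [abs_mul]
    exact (mul_le_of_le_one_right (abs_nonneg e) (abs_cos_le_one t)).trans_lt he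
  linarith [neg_abs_le (e * cos t)]

lemma hasDerivAt_one_add_mul_cos (e t : ℝ) :
    HasDerivAt (fun s ↦ 1 + e * cos s) (-(e * sin t)) t :=
  (((hasDerivAt_cos t).const_mul e).const_add 1).congr_deriv (by ring)

section Kepler

variable {δ e a b : ℝ} {x y : ℝ → ℝ}

def keplerU (e : ℝ) (y : ℝ → ℝ) (t : ℝ) : ℝ := y t / (1 + e * cos t)

def keplerW (e : ℝ) (x y : ℝ → ℝ) (t : ℝ) : ℝ := (1 + e * cos t) * x t + e * sin t * y t

lemma IsHillSolution.hasDerivAt_keplerU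
    (h : IsHillSolution (fun θ ↦ 1 - δ / (1 + e * cos θ)) a b x y)
    (he : |e| < 1) {t : ℝ} (ht : t ∈ Icc a b) :
    HasDerivAt (keplerU e y) (((1 + e * cos t) ^ 2)⁻¹ * keplerW e x y t) t := by
  have hρ := (one_add_mul_cos_pos he t).ne'
  refine ((h t ht).2.div (hasDerivAt_one_add_mul_cos e t) hρ).congr_deriv ?_
  rw [keplerW]
  field_simp
  ring

lemma IsHillSolution.hasDerivAt_keplerW
    (h : IsHillSolution (fun θ ↦ 1 - δ / (1 + e * cos θ)) a b x y)
    (he : |e| < 1) {t : ℝ} (ht : t ∈ Icc a b) :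
    HasDerivAt (keplerW e x y) ((δ - 1) * (1 + e * cos t) * keplerU e y t) t := by
  have hρ := (one_add_mul_cos_pos he t).ne'
  refine (((hasDerivAt_one_add_mul_cos e t).mul (h t ht).1).add
    (((hasDerivAt_sin t).const_mul e).mul (h t ht).2)).congr_deriv ?_
  rw [keplerU]
  field_simp
  ring

lemma kepler_coeffs_pos (hδ : 1 < δ) (he : |e| < 1) (t : ℝ) :
    0 < ((1 + e * cos t) ^ 2)⁻¹ ∧ 0 < (δ - 1) * (1 + e * cos t) :=
  have hρ := one_add_mul_cos_pos he t
  ⟨by positivity, mul_pos (by linarith) hρ⟩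

lemma IsHillSolution.one_lt_x_two_pi
    (h : IsHillSolution (fun θ ↦ 1 - δ / (1 + e * cos θ)) 0 (2 * π) x y)
    (hδ : 1 < δ) (he : |e| < 1) (hx₀ : x 0 = 1) (hy₀ : y 0 = 0) : 1 < x (2 * π) := by
  have hw := (lt_and_lt_of_cooperative (fun t _ ↦ (kepler_coeffs_pos hδ he t).2)
    (fun t _ ↦ (kepler_coeffs_pos hδ he t).1) (fun t ↦ h.hasDerivAt_keplerW he)
    (fun t ↦ h.hasDerivAt_keplerU he) two_pi_pos
    (by simpa [keplerW, hx₀, hy₀] using one_add_mul_cos_pos he 0)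
    (by simp [keplerU, hy₀])).1
  simp only [keplerW, cos_zero, sin_zero, cos_two_pi, sin_two_pi, hx₀, hy₀] at hw
  nlinarith [neg_abs_le e]

lemma IsHillSolution.one_lt_y_two_pi
    (h : IsHillSolution (fun θ ↦ 1 - δ / (1 + e * cos θ)) 0 (2 * π) x y)
    (hδ : 1 < δ) (he : |e| < 1) (hx₀ : x 0 = 0) (hy₀ : y 0 = 1) : 1 < y (2 * π) := by
  have hu := (lt_and_lt_of_cooperative (fun t _ ↦ (kepler_coeffs_pos hδ he t).1)
    (fun t _ ↦ (kepler_coeffs_pos hδ he t).2) (fun t ↦ h.hasDerivAt_keplerU he)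
    (fun t ↦ h.hasDerivAt_keplerW he) two_pi_pos
    (by simpa [keplerU, hy₀] using one_add_mul_cos_pos he 0)
    (by simp [keplerW, hx₀, hy₀])).1
  simp only [keplerU, cos_zero, cos_two_pi, hy₀] at hu
  exact (div_lt_div_iff_of_pos_right (by simpa using one_add_mul_cos_pos he 0)).1 hu

end Kepler

lemma exists_one_lt_add_inv_eq {t : ℝ} (ht : 2 < t) : ∃ μ : ℝ, 1 < μ ∧ μ + μ⁻¹ = t := by
  set s := √(t ^ 2 - 4)
  have hs : s ^ 2 = t ^ 2 - 4 := sq_sqrt (by nlinarith)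
  have hs₀ : 0 < s := sqrt_pos.2 (by nlinarith)
  have hinv : ((t + s) / 2)⁻¹ = (t - s) / 2 := inv_eq_of_mul_eq_one_right (by nlinarith)
  exact ⟨(t + s) / 2, by linarith, by rw [hinv]; ring⟩

lemma Matrix.exists_charpoly_eq_of_det_eq_one_of_two_lt_trace (M : Matrix (Fin 2) (Fin 2) ℝ)
    (hdet : M.det = 1) (htr : 2 < M.trace) :
    ∃ μ : ℝ, 1 < μ ∧ M.charpoly = (X - C μ) * (X - C μ⁻¹) := by
  obtain ⟨μ, hμ, hsum⟩ := exists_one_lt_add_inv_eq htr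
  refine ⟨μ, hμ, ?_⟩
  rw [charpoly_fin_two, ← hsum, hdet, ← mul_inv_cancel₀ (by positivity : μ ≠ 0), C_add, C_mul]
  ring

lemma isHyperbolicMat_of_charpoly_eq_prod {m : Type*} [Fintype m] [DecidableEq m]
    (M : Matrix m m ℝ) (s : Multiset ℝ) (hM : M.charpoly = (s.map fun r ↦ X - C r).prod)
    (hs : ∀ r ∈ s, |r| ≠ 1) : IsHyperbolicMat M := by
  intro z hz
  rw [mem_spectrum_iff_isRoot_charpoly, show (Complex.ofReal : ℝ → ℂ) = Complex.ofRealHom from rfl,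
    charpoly_map, hM, Polynomial.map_multiset_prod, IsRoot, eval_multiset_prod,
    Multiset.prod_eq_zero_iff] at hz
  simp only [Multiset.map_map, Function.comp_apply, Polynomial.map_sub, map_X, map_C,
    Complex.ofRealHom_eq_coe, eval_sub, eval_X, eval_C, Multiset.mem_map, sub_eq_zero] at hz
  obtain ⟨r, hr, rfl⟩ := hz
  simpa using hs r hr

/-- for `δ > 1`, `e ∈ [0,1)`, the monodromy matrix `γ_{δ,e}(2π)` of
`γ′(θ) = J₂ diag(1, 1 - δ/(1 + e cos θ)) γ(θ)`, `γ(0) = I₂`, is hyperbolic; more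
precisely, there is `μ > 1` such that its eigenvalues are `μ` and `μ⁻¹`. -/
theorem kepler_type_monodromy_hyperbolic (δ e : ℝ) (hδ : 1 < δ) (he0 : 0 ≤ e) (he1 : e < 1)
    (γ : ℝ → Matrix (Fin 2) (Fin 2) ℝ)
    (hγ0 : γ 0 = 1)
    (hγ : ∀ θ ∈ Set.Icc (0:ℝ) (2 * π), ∀ i j,
      HasDerivAt (fun t => γ t i j)
        (((!![0, -1; 1, 0] : Matrix (Fin 2) (Fin 2) ℝ) *
          !![1, 0; 0, 1 - δ / (1 + e * Real.cos θ)] * γ θ) i j) θ) :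
    IsHyperbolicMat (γ (2 * π)) ∧
    ∃ μ : ℝ, 1 < μ ∧
      (γ (2 * π)).charpoly = (X - C μ) * (X - C μ⁻¹) := by
  have he : |e| < 1 := abs_lt.2 ⟨by linarith, he1⟩
  have h₀₀ : 1 < γ (2 * π) 0 0 :=
    (isHillSolution_col hγ 0).one_lt_x_two_pi hδ he (by simp [hγ0]) (by simp [hγ0])
  have h₁₁ : 1 < γ (2 * π) 1 1 :=
    (isHillSolution_col hγ 1).one_lt_y_two_pi hδ he (by simp [hγ0]) (by simp [hγ0])
  obtain ⟨μ, hμ, hcharpoly⟩ := (γ (2 * π)).exists_charpoly_eq_of_det_eq_one_of_two_lt_trace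
    (det_eq_one_of_hasDerivAt hγ two_pi_pos.le hγ0) (by rw [trace_fin_two]; linarith)
  refine ⟨isHyperbolicMat_of_charpoly_eq_prod _ {μ, μ⁻¹} (by simp [hcharpoly]) ?_, μ, hμ, hcharpoly⟩
  have hμ' : |μ| ≠ 1 := by rw [abs_of_pos (by linarith)]; exact hμ.ne'
  simpa [abs_inv] using hμ'
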